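/- arXiv:1911.10046 — 3 statements merged into one kernel-verified Lean document; each statement's English description precedes it below -/
import Mathlib

section
/- Every similarity class of a non-real quaternion λ contains exactly two complex numbers, and these two complex numbers are conjugates of each other: there exists a unique pair {z, z̄} ⊂ ℂ ⊂ ℍ with z ∉ ℝ such that q⁻¹λq = z for some nonzero quaternion q. -/
/-! Write `λ = a + v` with `v` pure imaginary and `s = ‖v‖ > 0`. Both `v` and `s i` square to
`-s²`, which makes `q = s - v i` a solution of `v q = q (s i)`: so `λ` is similar to `z = a + s i`
unless `q = 0`, in which case `λ = z̄` already; and `j` conjugates `z` to `z̄`. Conversely,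
similarity preserves the real part and the norm, and the only complex numbers with real part `a`
and modulus `‖λ‖` are `z` and `z̄`. -/

/-- The embedding of `ℂ` in the quaternions `ℍ` as the span of `1` and `i`. -/
noncomputable def complexToQuat (z : ℂ) : Quaternion ℝ := ⟨z.re, z.im, 0, 0⟩

open Quaternion

theorem isConj_iff_exists_inv_mul_mul {G₀ : Type*} [GroupWithZero G₀] {a b : G₀} :
    IsConj a b ↔ ∃ q, q ≠ 0 ∧ q⁻¹ * a * q = b := by
  rw [GroupWithZero.isConj_iff₀]
  constructor
  · rintro ⟨c, hc, h⟩
    exact ⟨c⁻¹, inv_ne_zero hc, by rwa [inv_inv]⟩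
  · rintro ⟨q, hq, h⟩
    exact ⟨q⁻¹, inv_ne_zero hq, by rwa [inv_inv]⟩

theorem semiconjBy_sub_mul_mul {A : Type*} [Ring A] {σ u v : A} (hσu : Commute σ u)
    (hu : u * u = -1) (hv : v * v = -(σ * σ)) :
    SemiconjBy (σ - v * u) (σ * u) v := by
  have hvuσu : v * u * (σ * u) = -(v * σ) := by
    rw [mul_assoc, ← mul_assoc u, ← hσu.eq, mul_assoc σ, hu, ← mul_assoc, mul_neg_one]
  unfold SemiconjBy
  rw [sub_mul, mul_sub, hvuσu, ← mul_assoc v, hv, ← mul_assoc, neg_mul,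
    sub_neg_eq_add, sub_neg_eq_add, add_comm]

namespace Quaternion

variable {R : Type*} [CommRing R]

theorem re_mul_comm (a b : ℍ[R]) : (a * b).re = (b * a).re := by
  simp only [re_mul]; ring

theorem re_eq_of_isConj {a b : ℍ[R]} (h : IsConj a b) : a.re = b.re := by
  obtain ⟨c, hc⟩ := h
  calc a.re = (↑c⁻¹ * (↑c * a)).re := by rw [← mul_assoc, Units.inv_mul, one_mul]
    _ = (↑c * a * ↑c⁻¹).re := re_mul_comm _ _
    _ = b.re := by rw [hc.eq, mul_assoc, Units.mul_inv, mul_one]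

theorem normSq_eq_of_isConj {a b : ℍ[R]} (h : IsConj a b) : normSq a = normSq b :=
  isConj_iff_eq.mp (normSq.map_isConj h)

theorem normSq_eq_re_sq_add_normSq_im (a : ℍ[R]) : normSq a = a.re ^ 2 + normSq a.im := by
  simp only [normSq_def', re_im, imI_im, imJ_im, imK_im]; ring

end Quaternion

section

variable (z : ℂ)

@[simp] theorem complexToQuat_re : (complexToQuat z).re = z.re := rfl
@[simp] theorem complexToQuat_imI : (complexToQuat z).imI = z.im := rfl
@[simp] theorem complexToQuat_imJ : (complexToQuat z).imJ = 0 := rfl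
@[simp] theorem complexToQuat_imK : (complexToQuat z).imK = 0 := rfl

theorem complexToQuat_I_mul_self : complexToQuat .I * complexToQuat .I = -1 := by
  ext <;> simp [re_mul, imI_mul, imJ_mul, imK_mul]

theorem complexToQuat_eq_re_add_im_mul_I :
    complexToQuat z = ↑z.re + ↑z.im * complexToQuat .I := by
  ext <;> simp [re_mul, imI_mul, imJ_mul, imK_mul]

theorem normSq_complexToQuat : normSq (complexToQuat z) = z.re ^ 2 + z.im ^ 2 := by
  simp [normSq_def']

def quatJ : ℍ[ℝ] := ⟨0, 0, 1, 0⟩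

theorem quatJ_ne_zero : quatJ ≠ 0 := fun h => by
  simpa [quatJ] using congrArg QuaternionAlgebra.imJ h

theorem quatJ_mul_complexToQuat :
    quatJ * complexToQuat z = complexToQuat (starRingEnd ℂ z) * quatJ := by
  ext <;> simp only [re_mul, imI_mul, imJ_mul, imK_mul] <;> simp [quatJ]

theorem isConj_complexToQuat_conj :
    IsConj (complexToQuat z) (complexToQuat (starRingEnd ℂ z)) :=
  ⟨Units.mk0 quatJ quatJ_ne_zero, quatJ_mul_complexToQuat z⟩

end

theorem isConj_complexToQuat (lam : ℍ[ℝ]) :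
    IsConj lam (complexToQuat ⟨lam.re, ‖lam.im‖⟩) := by
  set z : ℂ := ⟨lam.re, ‖lam.im‖⟩
  set σ : ℍ[ℝ] := ↑‖lam.im‖
  have hv : lam.im * lam.im = -(σ * σ) := by
    rw [← sq, im_sq, normSq_eq_norm_mul_self, coe_mul]
  have hlam : lam = ↑lam.re + lam.im := (re_add_im lam).symm
  have hz : complexToQuat z = ↑lam.re + σ * complexToQuat .I :=
    complexToQuat_eq_re_add_im_mul_I z
  by_cases hq : σ - lam.im * complexToQuat .I = 0
  · have him : lam.im = -(σ * complexToQuat .I) := by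
      rw [sub_eq_zero.mp hq, mul_assoc, complexToQuat_I_mul_self, mul_neg_one, neg_neg]
    have hconj : lam = complexToQuat (starRingEnd ℂ z) := by
      rw [complexToQuat_eq_re_add_im_mul_I]; conv_lhs => rw [hlam, him]
      simp [z, σ]
    exact hconj ▸ (isConj_complexToQuat_conj z).symm
  · have hsemi := SemiconjBy.add_right (coe_commute lam.re _).symm
      (semiconjBy_sub_mul_mul (coe_commute _ _) complexToQuat_I_mul_self hv)
    rw [← hlam, ← hz] at hsemi
    exact IsConj.symm ⟨Units.mk0 _ hq, hsemi⟩

theorem eq_or_eq_conj_of_isConj_complexToQuat {lam : ℍ[ℝ]} {w : ℂ}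
    (h : IsConj lam (complexToQuat w)) :
    w = ⟨lam.re, ‖lam.im‖⟩ ∨ w = starRingEnd ℂ ⟨lam.re, ‖lam.im‖⟩ := by
  have hre : w.re = lam.re := (re_eq_of_isConj h).symm
  have hnorm := normSq_eq_of_isConj h
  rw [normSq_complexToQuat, normSq_eq_re_sq_add_normSq_im, normSq_eq_norm_mul_self, hre] at hnorm
  have him : w.im ^ 2 = ‖lam.im‖ ^ 2 := by linear_combination -hnorm
  rcases sq_eq_sq_iff_eq_or_eq_neg.mp him with h | h
  · exact Or.inl (Complex.ext hre h)
  · exact Or.inr (Complex.ext hre h)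

/-- Every similarity class of a non-real quaternion `λ` contains exactly two
complex numbers, and these two complex numbers are conjugates of each other. -/
theorem similarity_class_complex_pair (lam : Quaternion ℝ)
    (hlam : lam.imI ≠ 0 ∨ lam.imJ ≠ 0 ∨ lam.imK ≠ 0) :
    ∃ z : ℂ, z.im ≠ 0 ∧
      (∃ q : Quaternion ℝ, q ≠ 0 ∧ q⁻¹ * lam * q = complexToQuat z) ∧
      (∃ q : Quaternion ℝ, q ≠ 0 ∧ q⁻¹ * lam * q = complexToQuat (starRingEnd ℂ z)) ∧
      (∀ w : ℂ, (∃ q : Quaternion ℝ, q ≠ 0 ∧ q⁻¹ * lam * q = complexToQuat w) →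
        w = z ∨ w = starRingEnd ℂ z) := by
  have him : lam.im ≠ 0 := by
    rw [Ne, Quaternion.ext_iff]; simpa [or_iff_not_and_not] using hlam
  simp only [← isConj_iff_exists_inv_mul_mul]
  have hz := isConj_complexToQuat lam
  exact ⟨_, norm_ne_zero_iff.mpr him, hz, hz.trans (isConj_complexToQuat_conj _),
    fun w => eq_or_eq_conj_of_isConj_complexToQuat⟩
end

section
/- The characteristic polynomial of the complexification A_ℂ of a quaternionic matrix A has real coefficients. -/
noncomputable def qPart1 {m : Type*} (A : Matrix m m (Quaternion ℝ)) : Matrix m m ℂ :=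
  fun i j => ⟨(A i j).re, (A i j).imI⟩

noncomputable def qPart2 {m : Type*} (A : Matrix m m (Quaternion ℝ)) : Matrix m m ℂ :=
  fun i j => ⟨(A i j).imJ, -(A i j).imK⟩

noncomputable def complexify {m : Type*} (A : Matrix m m (Quaternion ℝ)) :
    Matrix (m ⊕ m) (m ⊕ m) ℂ :=
  Matrix.fromBlocks (qPart1 A) (-((qPart2 A).map (starRingEnd ℂ)))
    (qPart2 A) ((qPart1 A).map (starRingEnd ℂ))

open Matrix Polynomial in
lemma charpoly_conj_aux {n R : Type*} [CommRing R] [Fintype n] [DecidableEq n]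
    (J B : Matrix n n R) (hJ : J * J = -1) :
    (J * B * (-J)).charpoly = B.charpoly := by
  have h1 : J * (-J) = 1 := by rw [mul_neg, hJ]; simp
  have hs : ∀ M : Matrix n n R[X],
      M * (scalar n) (X : R[X]) = (scalar n) (X : R[X]) * M := fun M =>
    (Matrix.scalar_commute (n := n) (X : R[X]) (fun r => Commute.all (X : R[X]) r) M).symm
  set f : Matrix n n R →+* Matrix n n R[X] := (C : R →+* R[X]).mapMatrix with hf
  have key : charmatrix (J * B * (-J)) = f J * charmatrix B * f (-J) := by
    rw [charmatrix, charmatrix]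
    simp only [← RingHom.mapMatrix_apply, ← hf, _root_.map_mul, _root_.map_neg]
    rw [mul_sub, sub_mul]
    congr 1
    rw [hs (f J), mul_assoc, mul_neg, ← _root_.map_mul, hJ, _root_.map_neg, _root_.map_one, neg_neg, mul_one]
  have h2 : f J * f (-J) = 1 := by rw [← _root_.map_mul, h1, _root_.map_one]
  have hd := congrArg Matrix.det h2
  rw [det_mul, det_one] at hd
  rw [Matrix.charpoly, Matrix.charpoly, key, det_mul, det_mul,
    mul_comm (f J).det, mul_assoc, ← det_mul, h2, det_one, mul_one]

/-- The characteristic polynomial of the complexification `A_ℂ` of a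
quaternionic matrix `A` has real coefficients. -/
theorem charpoly_complexify_real (n : ℕ)
    (A : Matrix (Fin (n + 1)) (Fin (n + 1)) (Quaternion ℝ)) (k : ℕ) :
    ((complexify A).charpoly.coeff k).im = 0 := by
  set B := complexify A with hB
  set J : Matrix (Fin (n+1) ⊕ Fin (n+1)) (Fin (n+1) ⊕ Fin (n+1)) ℂ :=
    Matrix.fromBlocks 0 (-1) 1 0 with hJdef
  have hnegJ : -J = Matrix.fromBlocks 0 1 (-1) 0 := by
    rw [hJdef, Matrix.fromBlocks_neg]
    simp
  have hJ : J * J = -1 := by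
    rw [hJdef, Matrix.fromBlocks_multiply, ← Matrix.fromBlocks_one, Matrix.fromBlocks_neg]
    simp
  have hconj : J * B * (-J) = B.map (starRingEnd ℂ) := by
    rw [hnegJ, hJdef, hB, complexify, Matrix.fromBlocks_multiply, Matrix.fromBlocks_multiply]
    ext i j
    cases i <;> cases j <;>
      simp [Matrix.map_apply, Complex.ext_iff, qPart1, qPart2]
  have h1 : (B.map (starRingEnd ℂ)).charpoly = B.charpoly :=
    hconj ▸ charpoly_conj_aux J B hJ
  rw [Matrix.charpoly_map] at h1
  have h2 := congrArg (fun p => p.coeff k) h1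
  simp only [Polynomial.coeff_map] at h2
  have h3 := congrArg Complex.im h2
  simp only [Complex.conj_im] at h3
  have : ((complexify A).charpoly.coeff k).im = (B.charpoly.coeff k).im := by rw [hB]
  rw [this]
  linarith
end

section
/- For the quaternionic cross ratio 𝕏(z₁, z₂, z₃, z₄) = ⟨z₃, z₁⟩⟨z₃, z₂⟩⁻¹⟨z₄, z₂⟩⟨z₄, z₁⟩⁻¹, replacing the lifts zᵢ by zᵢ·λᵢ with λᵢ ∈ ℍ \ {0} changes 𝕏 within its similarity class up to real scaling; in particular, the real part divided by the norm, Re(𝕏)/|𝕏|, is independent of the chosen lifts. -/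
open Matrix

/-- The quaternionic Hermitian pairing `⟨z, w⟩ = w* H z`. -/
noncomputable def qherm {n : ℕ} (H : Matrix (Fin n) (Fin n) (Quaternion ℝ))
    (z w : Fin n → Quaternion ℝ) : Quaternion ℝ :=
  dotProduct (star w) (H.mulVec z)

/-- The quaternionic cross ratio `𝕏(z₁,z₂,z₃,z₄) = ⟨z₃,z₁⟩⟨z₃,z₂⟩⁻¹⟨z₄,z₂⟩⟨z₄,z₁⟩⁻¹`
(the order of the factors matters over `ℍ`). -/
noncomputable def qcrossRatio {n : ℕ} (H : Matrix (Fin n) (Fin n) (Quaternion ℝ))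
    (z₁ z₂ z₃ z₄ : Fin n → Quaternion ℝ) : Quaternion ℝ :=
  qherm H z₃ z₁ * (qherm H z₃ z₂)⁻¹ * qherm H z₄ z₂ * (qherm H z₄ z₁)⁻¹

/-! Rescaling the lifts turns `⟨z₃,z₁⟩` into `λ̄₁⟨z₃,z₁⟩λ₃`, and similarly for the other three
pairings; in the alternating product `𝕏` the inner factors `λ₃ λ₃⁻¹`, `λ̄₂⁻¹ λ̄₂`, `λ₄ λ₄⁻¹`
cancel, leaving `𝕏` conjugated by `λ̄₁`. Conjugation preserves both the real part
(as `Re (ab) = Re (ba)`) and the norm, and positive real scaling preserves their ratio. -/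

lemma Quaternion.re_mul_comm_s9 {R : Type*} [CommRing R] (a b : Quaternion R) :
    (a * b).re = (b * a).re := by
  simp only [Quaternion.re_mul]
  ring

lemma Quaternion.re_inv_mul_mul {q : Quaternion ℝ} (hq : q ≠ 0) (x : Quaternion ℝ) :
    (q⁻¹ * x * q).re = x.re := by
  rw [Quaternion.re_mul_comm_s9, mul_inv_cancel_left₀ hq]

lemma norm_inv_mul_mul {A : Type*} [NormedDivisionRing A] {q : A} (hq : q ≠ 0) (x : A) :
    ‖q⁻¹ * x * q‖ = ‖x‖ := by
  have hq' : ‖q‖ ≠ 0 := norm_ne_zero_iff.mpr hq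
  rw [norm_mul, norm_mul, norm_inv, mul_right_comm, inv_mul_cancel₀ hq', one_mul]

lemma Quaternion.re_div_norm_smul_inv_mul_mul {r : ℝ} (hr : 0 < r) {q : Quaternion ℝ}
    (hq : q ≠ 0) (x : Quaternion ℝ) :
    (r • (q⁻¹ * x * q)).re / ‖r • (q⁻¹ * x * q)‖ = x.re / ‖x‖ := by
  rw [Quaternion.re_smul, norm_smul, Quaternion.re_inv_mul_mul hq, norm_inv_mul_mul hq,
    Real.norm_of_nonneg hr.le, smul_eq_mul, mul_div_mul_left _ _ hr.ne']

lemma qherm_mul_right {n : ℕ} (H : Matrix (Fin n) (Fin n) (Quaternion ℝ))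
    (z w : Fin n → Quaternion ℝ) (a b : Quaternion ℝ) :
    qherm H (fun j => z j * a) (fun j => w j * b) = star b * qherm H z w * a := by
  simp only [qherm, dotProduct, mulVec, Pi.star_apply, StarMul.star_mul, Finset.mul_sum,
    Finset.sum_mul]
  refine Finset.sum_congr rfl fun i _ => Finset.sum_congr rfl fun j _ => ?_
  simp only [mul_assoc]

lemma qcrossRatio_mul_right {n : ℕ} (H : Matrix (Fin n) (Fin n) (Quaternion ℝ))
    (z₁ z₂ z₃ z₄ : Fin n → Quaternion ℝ) (lam₁ : Quaternion ℝ) {lam₂ lam₃ lam₄ : Quaternion ℝ}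
    (h₂ : lam₂ ≠ 0) (h₃ : lam₃ ≠ 0) (h₄ : lam₄ ≠ 0) :
    qcrossRatio H (fun j => z₁ j * lam₁) (fun j => z₂ j * lam₂)
        (fun j => z₃ j * lam₃) (fun j => z₄ j * lam₄) =
      star lam₁ * qcrossRatio H z₁ z₂ z₃ z₄ * (star lam₁)⁻¹ := by
  have h₂' : star lam₂ ≠ 0 := star_ne_zero.mpr h₂
  simp only [qcrossRatio, qherm_mul_right, _root_.mul_inv_rev]
  simp only [mul_assoc, mul_inv_cancel_left₀ h₃, inv_mul_cancel_left₀ h₂', mul_inv_cancel_left₀ h₄]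

theorem qcrossRatio_lift_similarity_general (n : ℕ)
    (H : Matrix (Fin (n + 1)) (Fin (n + 1)) (Quaternion ℝ))
    (z₁ z₂ z₃ z₄ : Fin (n + 1) → Quaternion ℝ)
    (lam₁ lam₂ lam₃ lam₄ : Quaternion ℝ)
    (h1 : lam₁ ≠ 0) (h2 : lam₂ ≠ 0) (h3 : lam₃ ≠ 0) (h4 : lam₄ ≠ 0) :
    (∃ r : ℝ, 0 < r ∧ ∃ q : Quaternion ℝ, q ≠ 0 ∧
        qcrossRatio H (fun j => z₁ j * lam₁) (fun j => z₂ j * lam₂)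
            (fun j => z₃ j * lam₃) (fun j => z₄ j * lam₄) =
          r • (q⁻¹ * qcrossRatio H z₁ z₂ z₃ z₄ * q)) ∧
      (qcrossRatio H (fun j => z₁ j * lam₁) (fun j => z₂ j * lam₂)
            (fun j => z₃ j * lam₃) (fun j => z₄ j * lam₄)).re /
          ‖qcrossRatio H (fun j => z₁ j * lam₁) (fun j => z₂ j * lam₂)
            (fun j => z₃ j * lam₃) (fun j => z₄ j * lam₄)‖ =
        (qcrossRatio H z₁ z₂ z₃ z₄).re / ‖qcrossRatio H z₁ z₂ z₃ z₄‖ := by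
  have hq : (star lam₁)⁻¹ ≠ 0 := inv_ne_zero (star_ne_zero.mpr h1)
  have hsim : qcrossRatio H (fun j => z₁ j * lam₁) (fun j => z₂ j * lam₂)
      (fun j => z₃ j * lam₃) (fun j => z₄ j * lam₄) =
      (1 : ℝ) • ((star lam₁)⁻¹⁻¹ * qcrossRatio H z₁ z₂ z₃ z₄ * (star lam₁)⁻¹) := by
    rw [inv_inv, one_smul, qcrossRatio_mul_right H z₁ z₂ z₃ z₄ lam₁ h2 h3 h4]
  refine ⟨⟨1, one_pos, _, hq, hsim⟩, ?_⟩
  rw [hsim, Quaternion.re_div_norm_smul_inv_mul_mul one_pos hq]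

/-- Replacing the lifts `zᵢ` by `zᵢ·λᵢ` changes the quaternionic cross ratio
within its similarity class up to positive real scaling; in particular `Re(𝕏)/|𝕏|` is
independent of the chosen lifts. -/
theorem qcrossRatio_lift_similarity (n : ℕ)
    (H : Matrix (Fin (n + 1)) (Fin (n + 1)) (Quaternion ℝ)) (hHerm : Hᴴ = H)
    (z₁ z₂ z₃ z₄ : Fin (n + 1) → Quaternion ℝ)
    (hnull₁ : qherm H z₁ z₁ = 0) (hnull₂ : qherm H z₂ z₂ = 0)
    (hnull₃ : qherm H z₃ z₃ = 0) (hnull₄ : qherm H z₄ z₄ = 0)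
    (h32 : qherm H z₃ z₂ ≠ 0) (h41 : qherm H z₄ z₁ ≠ 0)
    (hX : qcrossRatio H z₁ z₂ z₃ z₄ ≠ 0)
    (lam₁ lam₂ lam₃ lam₄ : Quaternion ℝ)
    (h1 : lam₁ ≠ 0) (h2 : lam₂ ≠ 0) (h3 : lam₃ ≠ 0) (h4 : lam₄ ≠ 0) :
    (∃ r : ℝ, 0 < r ∧ ∃ q : Quaternion ℝ, q ≠ 0 ∧
        qcrossRatio H (fun j => z₁ j * lam₁) (fun j => z₂ j * lam₂)
            (fun j => z₃ j * lam₃) (fun j => z₄ j * lam₄) =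
          r • (q⁻¹ * qcrossRatio H z₁ z₂ z₃ z₄ * q)) ∧
      (qcrossRatio H (fun j => z₁ j * lam₁) (fun j => z₂ j * lam₂)
            (fun j => z₃ j * lam₃) (fun j => z₄ j * lam₄)).re /
          ‖qcrossRatio H (fun j => z₁ j * lam₁) (fun j => z₂ j * lam₂)
            (fun j => z₃ j * lam₃) (fun j => z₄ j * lam₄)‖ =
        (qcrossRatio H z₁ z₂ z₃ z₄).re / ‖qcrossRatio H z₁ z₂ z₃ z₄‖ :=
  qcrossRatio_lift_similarity_general n H z₁ z₂ z₃ z₄ lam₁ lam₂ lam₃ lam₄ h1 h2 h3 h4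
end
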